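/- Let p ≥ 2 and D_p(X) = tr(X) + (p-2)λ_max(X). For symmetric positive definite matrices X₁, X₂ and ν ∈ [0,1], the two-matrix case of the harmonic mean inequality holds: 1 / D_p((νX₁ + (1-ν)X₂)⁻¹) ≥ ν / D_p(X₁⁻¹) + (1-ν) / D_p(X₂⁻¹). -/

import Mathlib

open Matrix

noncomputable def lamMax {n : ℕ} (X : Matrix (Fin n) (Fin n) ℝ) : ℝ :=
  sSup (spectrum ℝ X)

noncomputable def lamMin {n : ℕ} (X : Matrix (Fin n) (Fin n) ℝ) : ℝ :=
  sInf (spectrum ℝ X)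

noncomputable def Dp {n : ℕ} (p : ℝ) (X : Matrix (Fin n) (Fin n) ℝ) : ℝ :=
  X.trace + (p - 2) * lamMax X

/-!
`Dp p` is monotone for the Loewner order and sublinear on symmetric matrices, since the trace is
linear and `lamMax` is the maximum of the Rayleigh quotient. Put `M = ν X₁ + (1 - ν) X₂`. For any
`s₁ s₂` with `ν s₁ + (1 - ν) s₂ = 1`, writing `Cᵢ = M⁻¹ - sᵢ Xᵢ⁻¹`,

  `ν s₁² X₁⁻¹ + (1 - ν) s₂² X₂⁻¹ - M⁻¹ = ν C₁ X₁ C₁ + (1 - ν) C₂ X₂ C₂ ≥ 0`,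

so `Dp p M⁻¹ ≤ ν s₁² Dp p X₁⁻¹ + (1 - ν) s₂² Dp p X₂⁻¹`. The minimum of the right-hand side over
that line is `(ν / Dp p X₁⁻¹ + (1 - ν) / Dp p X₂⁻¹)⁻¹`, attained at `sᵢ ∝ 1 / Dp p Xᵢ⁻¹`.
-/

open scoped MatrixOrder

section LamMax

variable {n : ℕ} {A B : Matrix (Fin n) (Fin n) ℝ}

lemma Matrix.IsHermitian.le_lamMax_smul_one (hA : A.IsHermitian) :
    A ≤ lamMax A • (1 : Matrix (Fin n) (Fin n) ℝ) := by
  rw [Matrix.le_iff, posSemidef_iff_isHermitian_and_spectrum_nonneg]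
  refine ⟨(isHermitian_one.smul (.all _)).sub hA, ?_⟩
  rw [← Algebra.algebraMap_eq_smul_one, ← spectrum.singleton_sub_eq]
  rintro _ ⟨_, rfl, μ, hμ, rfl⟩
  exact sub_nonneg.mpr (le_csSup A.finite_real_spectrum.bddAbove hμ)

lemma Matrix.IsHermitian.dotProduct_mulVec_le_lamMax (hA : A.IsHermitian) (x : Fin n → ℝ) :
    x ⬝ᵥ A *ᵥ x ≤ lamMax A * (x ⬝ᵥ x) := by
  have h := (Matrix.le_iff.mp hA.le_lamMax_smul_one).dotProduct_mulVec_nonneg x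
  simp only [star_trivial, sub_mulVec, dotProduct_sub, smul_mulVec, one_mulVec, dotProduct_smul,
    smul_eq_mul] at h
  linarith

lemma Matrix.IsHermitian.exists_eigenvalues_eq_lamMax [NeZero n] (hA : A.IsHermitian) :
    ∃ i, hA.eigenvalues i = lamMax A := by
  have hne : (spectrum ℝ A).Nonempty := by
    rw [hA.spectrum_real_eq_range_eigenvalues]; exact Set.range_nonempty _
  simpa [lamMax, hA.spectrum_real_eq_range_eigenvalues] using
    hne.csSup_mem A.finite_real_spectrum

lemma Matrix.IsHermitian.lamMax_le_of_dotProduct_mulVec_le [NeZero n] (hA : A.IsHermitian)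
    {c : ℝ} (h : ∀ x, x ⬝ᵥ A *ᵥ x ≤ c * (x ⬝ᵥ x)) : lamMax A ≤ c := by
  obtain ⟨i, hi⟩ := hA.exists_eigenvalues_eq_lamMax
  set v : Fin n → ℝ := ⇑(hA.eigenvectorBasis i)
  have hv : v ⬝ᵥ v = 1 := hA.eigenvectorBasis.inner_eq_one i
  have := h v
  rwa [hA.mulVec_eigenvectorBasis, hi, dotProduct_smul, smul_eq_mul, hv, mul_one, mul_one] at this

lemma lamMax_mono [NeZero n] (hA : A.IsHermitian) (hB : B.IsHermitian) (hAB : A ≤ B) :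
    lamMax A ≤ lamMax B :=
  hA.lamMax_le_of_dotProduct_mulVec_le fun x ↦ by
    have := (Matrix.le_iff.mp hAB).dotProduct_mulVec_nonneg x
    rw [star_trivial, sub_mulVec, dotProduct_sub] at this
    linarith [hB.dotProduct_mulVec_le_lamMax x]

lemma lamMax_smul_add_smul_le [NeZero n] (hA : A.IsHermitian) (hB : B.IsHermitian) {α β : ℝ}
    (hα : 0 ≤ α) (hβ : 0 ≤ β) : lamMax (α • A + β • B) ≤ α * lamMax A + β * lamMax B :=
  ((hA.smul (.all α)).add (hB.smul (.all β))).lamMax_le_of_dotProduct_mulVec_le fun x ↦ by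
    rw [add_mulVec, smul_mulVec, smul_mulVec, dotProduct_add, dotProduct_smul, dotProduct_smul,
      smul_eq_mul, smul_eq_mul, add_mul, mul_assoc, mul_assoc]
    gcongr
    exacts [hA.dotProduct_mulVec_le_lamMax x, hB.dotProduct_mulVec_le_lamMax x]

lemma Matrix.PosDef.lamMax_pos [NeZero n] (hA : A.PosDef) : 0 < lamMax A := by
  obtain ⟨i, hi⟩ := hA.isHermitian.exists_eigenvalues_eq_lamMax
  exact hi ▸ hA.eigenvalues_pos i

end LamMax

section Dp

variable {n : ℕ} {p : ℝ} {A B : Matrix (Fin n) (Fin n) ℝ}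

lemma Dp_fin_zero (p : ℝ) (X : Matrix (Fin 0) (Fin 0) ℝ) : Dp p X = 0 := by
  rw [Dp, trace_eq_zero_of_isEmpty, lamMax, spectrum.of_subsingleton, Real.sSup_empty, mul_zero,
    add_zero]

lemma Dp_mono [NeZero n] (hp : 2 ≤ p) (hA : A.IsHermitian) (hB : B.IsHermitian) (hAB : A ≤ B) :
    Dp p A ≤ Dp p B := by
  have htr : A.trace ≤ B.trace := by
    simpa [trace_sub] using (Matrix.le_iff.mp hAB).trace_nonneg
  unfold Dp
  gcongr
  exact lamMax_mono hA hB hAB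

lemma Dp_smul_add_smul_le [NeZero n] (hp : 2 ≤ p) (hA : A.IsHermitian) (hB : B.IsHermitian)
    {α β : ℝ} (hα : 0 ≤ α) (hβ : 0 ≤ β) :
    Dp p (α • A + β • B) ≤ α * Dp p A + β * Dp p B := by
  have h := mul_le_mul_of_nonneg_left (lamMax_smul_add_smul_le hA hB hα hβ)
    (sub_nonneg.mpr hp)
  simp only [Dp, trace_add, trace_smul, smul_eq_mul]
  linarith

lemma Matrix.PosDef.Dp_pos [NeZero n] (hp : 2 ≤ p) (hA : A.PosDef) : 0 < Dp p A :=
  add_pos_of_pos_of_nonneg hA.trace_pos (mul_nonneg (sub_nonneg.mpr hp) hA.lamMax_pos.le)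

end Dp

section InverseConvexity

variable {m : Type*} {A B X X₁ X₂ : Matrix m m ℝ} {α β : ℝ}

lemma Matrix.PosDef.smul_add_smul (hA : A.PosDef) (hB : B.PosDef) (hα : 0 ≤ α) (hβ : 0 ≤ β)
    (hαβ : 0 < α + β) : (α • A + β • B).PosDef := by
  rcases hα.eq_or_lt with rfl | hα
  · simpa using hB.smul (by simpa using hαβ)
  · exact (hA.smul hα).add_posSemidef (hB.posSemidef.smul hβ)

variable [Fintype m] [DecidableEq m]

lemma sub_smul_inv_mul_mul_sub_smul_inv (hX : IsUnit X.det) (N : Matrix m m ℝ) (s : ℝ) :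
    (N - s • X⁻¹) * X * (N - s • X⁻¹) = N * X * N - (2 * s) • N + s ^ 2 • X⁻¹ := by
  simp only [sub_mul, mul_sub, smul_mul_assoc, mul_smul_comm, nonsing_inv_mul _ hX,
    mul_nonsing_inv_cancel_right _ _ hX, one_mul]
  module

lemma Matrix.PosDef.zero_le_sub_smul_inv_mul_mul_sub_smul_inv (hX : X.PosDef) {N : Matrix m m ℝ}
    (hN : N.IsHermitian) (s : ℝ) : 0 ≤ (N - s • X⁻¹) * X * (N - s • X⁻¹) := by
  have hC : (N - s • X⁻¹).IsHermitian := hN.sub (hX.inv.isHermitian.smul (.all s))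
  have h := hX.posSemidef.mul_mul_conjTranspose_same (N - s • X⁻¹)
  rw [hC.eq] at h
  exact h.nonneg

lemma inv_smul_add_smul_le (h₁ : X₁.PosDef) (h₂ : X₂.PosDef) (hα : 0 ≤ α) (hβ : 0 ≤ β)
    {s₁ s₂ : ℝ} (hs : α * s₁ + β * s₂ = 1) :
    (α • X₁ + β • X₂)⁻¹ ≤ (α * s₁ ^ 2) • X₁⁻¹ + (β * s₂ ^ 2) • X₂⁻¹ := by
  have hαβ : 0 < α + β := by
    by_contra! h
    obtain ⟨rfl, rfl⟩ : α = 0 ∧ β = 0 := ⟨by linarith, by linarith⟩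
    simp at hs
  have hM := h₁.smul_add_smul h₂ hα hβ hαβ
  set N := (α • X₁ + β • X₂)⁻¹
  have hNMN : α • (N * X₁ * N) + β • (N * X₂ * N) = N := by
    have h : N * (α • X₁ + β • X₂) * N = N := by
      rw [nonsing_inv_mul _ hM.det_pos.ne'.isUnit, one_mul]
    simpa only [mul_add, add_mul, mul_smul_comm, smul_mul_assoc] using h
  have key : (α * s₁ ^ 2) • X₁⁻¹ + (β * s₂ ^ 2) • X₂⁻¹ - N =
      α • ((N - s₁ • X₁⁻¹) * X₁ * (N - s₁ • X₁⁻¹)) +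
        β • ((N - s₂ • X₂⁻¹) * X₂ * (N - s₂ • X₂⁻¹)) := by
    rw [sub_smul_inv_mul_mul_sub_smul_inv h₁.det_pos.ne'.isUnit,
      sub_smul_inv_mul_mul_sub_smul_inv h₂.det_pos.ne'.isUnit]
    linear_combination (norm := module) (2 : ℝ) • hs • N - hNMN
  have hN : N.IsHermitian := hM.inv.isHermitian
  rw [Matrix.le_iff, key]
  exact ((h₁.zero_le_sub_smul_inv_mul_mul_sub_smul_inv hN s₁).posSemidef.smul hα).add
    ((h₂.zero_le_sub_smul_inv_mul_mul_sub_smul_inv hN s₂).posSemidef.smul hβ)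

end InverseConvexity

section HarmonicMean

variable {n : ℕ} {p α β s₁ s₂ : ℝ} {X₁ X₂ : Matrix (Fin n) (Fin n) ℝ}

lemma Dp_inv_smul_add_smul_le [NeZero n] (hp : 2 ≤ p) (h₁ : X₁.PosDef) (h₂ : X₂.PosDef)
    (hα : 0 ≤ α) (hβ : 0 ≤ β) (hs : α * s₁ + β * s₂ = 1) :
    Dp p (α • X₁ + β • X₂)⁻¹ ≤ α * s₁ ^ 2 * Dp p X₁⁻¹ + β * s₂ ^ 2 * Dp p X₂⁻¹ := by
  have hM : (α • X₁ + β • X₂).IsHermitian :=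
    (h₁.isHermitian.smul (.all α)).add (h₂.isHermitian.smul (.all β))
  have hQ : ((α * s₁ ^ 2) • X₁⁻¹ + (β * s₂ ^ 2) • X₂⁻¹).IsHermitian :=
    (h₁.inv.isHermitian.smul (.all _)).add (h₂.inv.isHermitian.smul (.all _))
  calc Dp p (α • X₁ + β • X₂)⁻¹
      ≤ Dp p ((α * s₁ ^ 2) • X₁⁻¹ + (β * s₂ ^ 2) • X₂⁻¹) :=
        Dp_mono hp hM.inv hQ (inv_smul_add_smul_le h₁ h₂ hα hβ hs)
    _ ≤ α * s₁ ^ 2 * Dp p X₁⁻¹ + β * s₂ ^ 2 * Dp p X₂⁻¹ :=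
        Dp_smul_add_smul_le hp h₁.inv.isHermitian h₂.inv.isHermitian (by positivity)
          (by positivity)

end HarmonicMean

lemma div_add_div_le_one_div_of_forall_le {a b d α β : ℝ} (ha : a ≠ 0) (hb : b ≠ 0) (hd : 0 < d)
    (h : ∀ s₁ s₂, α * s₁ + β * s₂ = 1 → d ≤ α * s₁ ^ 2 * a + β * s₂ ^ 2 * b) :
    α / a + β / b ≤ 1 / d := by
  set e := α / a + β / b with he_def
  rcases le_or_gt e 0 with he | he
  · exact he.trans (by positivity)
  have hmin := h (1 / (e * a)) (1 / (e * b)) (by field_simp; rw [he_def]; field_simp)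
  have hval : α * (1 / (e * a)) ^ 2 * a + β * (1 / (e * b)) ^ 2 * b = 1 / e := by
    field_simp; rw [he_def]; field_simp
  rw [hval] at hmin
  exact (le_one_div he hd).mpr hmin

theorem stmt5 {n : ℕ} (p : ℝ) (hp : 2 ≤ p)
    (X₁ X₂ : Matrix (Fin n) (Fin n) ℝ) (h1 : X₁.PosDef) (h2 : X₂.PosDef)
    (ν : ℝ) (hν0 : 0 ≤ ν) (hν1 : ν ≤ 1) :
    ν / Dp p X₁⁻¹ + (1 - ν) / Dp p X₂⁻¹ ≤ 1 / Dp p (ν • X₁ + (1 - ν) • X₂)⁻¹ := by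
  rcases Nat.eq_zero_or_pos n with rfl | hn
  · simp [Dp_fin_zero]
  have : NeZero n := ⟨hn.ne'⟩
  have hM : (ν • X₁ + (1 - ν) • X₂).PosDef :=
    h1.smul_add_smul h2 hν0 (by linarith) (by linarith)
  refine div_add_div_le_one_div_of_forall_le (h1.inv.Dp_pos hp).ne' (h2.inv.Dp_pos hp).ne'
    (hM.inv.Dp_pos hp) fun s₁ s₂ hs ↦ ?_
  exact Dp_inv_smul_add_smul_le hp h1 h2 hν0 (by linarith) hs
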